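/- If Q₁ and Q₂ are countable thin quasi-orders, then the product R = Q₁ × Q₂, ordered coordinatewise by (p₁,p₂) ≤_R (q₁,q₂) iff p₁ ≤_{Q₁} q₁ and p₂ ≤_{Q₂} q₂, is thin. -/

import Mathlib

/-- The shift map on sequences. -/
def seqShift {Q : Type*} (X : ℕ → Q) : ℕ → Q := fun k => X (k + 1)

/-- The set `Q⃗` of sequences `X` with `¬ r (X k) (X (k+1))` for all `k`. -/
def vecSet {Q : Type*} (r : Q → Q → Prop) : Set (ℕ → Q) :=
  {X | ∀ k, ¬ r (X k) (X (k + 1))}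

/-- The shift graph on a subset `A` of `Qᴺ` (with `Q` discrete, `Qᴺ` carrying the product
Borel structure) admits a Borel proper 3-colouring. -/
def Colour3 {Q : Type*} (A : Set (ℕ → Q)) : Prop :=
  letI : MeasurableSpace Q := ⊤
  ∃ c : A → Fin 3, Measurable c ∧
    ∀ (X : ℕ → Q) (hX : X ∈ A) (hX' : seqShift X ∈ A),
      c ⟨X, hX⟩ ≠ c ⟨seqShift X, hX'⟩

/-- A relation `r` on `Q` is *thin* if the shift graph on `Q⃗ = vecSet r`
is Borel 3-colourable; otherwise it is *thick*. -/
def IsThin {Q : Type*} (r : Q → Q → Prop) : Prop := Colour3 (vecSet r)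

/-!
Along a sequence in the product's `vecSet`, at each step the first coordinates or the second
coordinates fail to be related; the Boolean sequence `s = fstStep r₁ X` records which. If `s` is
eventually constant, then from its stabilisation index `d` on one coordinate sequence lies in its
own `vecSet` and gets its given colour `b`, which does not change under the shift as long as
`d > 0`; before `d` the colour is `b + 1` or `b + 2` according to the parity of `d`, and `d` drops
by one under the shift. If `s` switches infinitely often, the parity of the distance to the next
switch, together with `s 0`, is a proper 3-colouring. Every ingredient is a first-index function
of countably many coordinates, hence Borel.
-/

def countdownColour (d : ℕ) (b : Fin 3) : Fin 3 :=
  if d = 0 then b else if Odd d then b + 1 else b + 2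

lemma countdownColour_succ_ne (n : ℕ) (b : Fin 3) :
    countdownColour (n + 1) b ≠ countdownColour n b := by
  rcases Nat.even_or_odd n with hn | hn
  · rcases n.eq_zero_or_pos with rfl | hpos
    · revert b; decide
    · simp [countdownColour, hpos.ne', hn.add_one, Nat.not_odd_iff_even.2 hn]
  · simp [countdownColour, hn, hn.pos.ne', Nat.not_odd_iff_even.2 hn.add_one]

section BoolSequences

def IsConstFrom (s : ℕ → Bool) (m : ℕ) : Prop := ∀ k, s (m + k) = s m

noncomputable def stabIndex (s : ℕ → Bool) : ℕ := sInf {m | IsConstFrom s m}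

noncomputable def firstSwitch (s : ℕ → Bool) : ℕ := sInf {k | s k ≠ s (k + 1)}

variable {s : ℕ → Bool}

lemma isConstFrom_seqShift {m : ℕ} : IsConstFrom (seqShift s) m ↔ IsConstFrom s (m + 1) := by
  simp only [IsConstFrom, seqShift, Nat.add_right_comm]

lemma IsConstFrom.succ {m : ℕ} (h : IsConstFrom s m) : IsConstFrom s (m + 1) := fun k => by
  rw [show m + 1 + k = m + (k + 1) by omega, h, h]

lemma exists_isConstFrom_seqShift : (∃ m, IsConstFrom (seqShift s) m) ↔ ∃ m, IsConstFrom s m :=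
  ⟨fun ⟨m, hm⟩ => ⟨m + 1, isConstFrom_seqShift.1 hm⟩,
    fun ⟨m, hm⟩ => ⟨m, isConstFrom_seqShift.2 hm.succ⟩⟩

lemma isConstFrom_stabIndex (h : ∃ m, IsConstFrom s m) : IsConstFrom s (stabIndex s) :=
  Nat.sInf_mem h

lemma stabIndex_seqShift (h : ∃ m, IsConstFrom s m) :
    stabIndex (seqShift s) = stabIndex s - 1 := by
  rcases Nat.eq_zero_or_pos (stabIndex s) with h0 | hpos
  · have h0' : IsConstFrom s 0 := h0 ▸ isConstFrom_stabIndex h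
    rw [h0]
    exact Nat.sInf_eq_zero.2 (Or.inl (isConstFrom_seqShift.2 h0'.succ))
  · have : stabIndex (seqShift s) + 1 = stabIndex s := by
      simp only [stabIndex, isConstFrom_seqShift]
      exact Nat.sInf_add (p := IsConstFrom s) hpos
    omega

lemma firstSwitch_seqShift {n : ℕ} (h : firstSwitch s = n + 1) :
    firstSwitch (seqShift s) = n := by
  have : firstSwitch (seqShift s) + 1 = firstSwitch s :=
    Nat.sInf_add (p := fun k => s k ≠ s (k + 1)) (by rw [← firstSwitch]; omega)
  omega

lemma exists_ne_succ_of_not_exists_isConstFrom (h : ¬ ∃ m, IsConstFrom s m) :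
    ∃ k, s k ≠ s (k + 1) := by
  by_contra! hs
  refine h ⟨0, fun k => ?_⟩
  induction k with
  | zero => rfl
  | succ k ih => rw [← ih]; exact (hs _).symm

noncomputable def switchColour (s : ℕ → Bool) : Fin 3 :=
  if Odd (firstSwitch s) then 2 else bif s 0 then 0 else 1

lemma switchColour_ne_seqShift (h : ∃ k, s k ≠ s (k + 1)) :
    switchColour s ≠ switchColour (seqShift s) := by
  cases hn : firstSwitch s with
  | zero =>
    have h01 : s 0 ≠ s 1 := by
      have : s (firstSwitch s) ≠ s (firstSwitch s + 1) := Nat.sInf_mem h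
      rwa [hn] at this
    simp only [switchColour, hn, seqShift, Nat.not_odd_zero, if_false]
    split_ifs <;> revert h01 <;> cases s 0 <;> cases s 1 <;> decide
  | succ n =>
    simp only [switchColour, hn, firstSwitch_seqShift hn, Nat.odd_add_one]
    split_ifs <;> cases s 0 <;> cases seqShift s 0 <;> decide

end BoolSequences

section Sequences

variable {Q : Type*}

def seqTail (m : ℕ) (X : ℕ → Q) : ℕ → Q := fun k => X (m + k)

variable {X : ℕ → Q} {m : ℕ}

lemma seqTail_seqShift : seqTail m (seqShift X) = seqTail (m + 1) X :=
  funext fun k => by simp only [seqTail, seqShift, Nat.add_right_comm]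

lemma seqTail_succ : seqTail (m + 1) X = seqShift (seqTail m X) :=
  funext fun k => by simp only [seqTail, seqShift, Nat.add_right_comm, Nat.add_assoc]

lemma seqShift_mem_vecSet {r : Q → Q → Prop} (hX : X ∈ vecSet r) : seqShift X ∈ vecSet r :=
  fun k => hX (k + 1)

lemma seqTail_mem_vecSet {r : Q → Q → Prop} (hX : X ∈ vecSet r) : seqTail m X ∈ vecSet r :=
  fun k => hX (m + k)

end Sequences

section Measurability

variable {α P : Type*} [MeasurableSpace α] [MeasurableSpace P] [DiscreteMeasurableSpace P]
  [Countable P]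

/- `sInf ∅ = 0` in `ℕ`, so this `sInf` is `Nat.find` of the predicate made true everywhere when it
never holds. -/
lemma measurable_sInf_setOf {p : ℕ → α → Prop} (hp : ∀ n, MeasurableSet {x | p n x}) :
    Measurable fun x => sInf {n | p n x} := by
  classical
  have hex : ∀ x, ∃ n, p n x ∨ ∀ m, ¬ p m x := fun x => by
    by_cases h : ∃ n, p n x
    · exact h.imp fun _ => Or.inl
    · exact ⟨0, Or.inr (not_exists.1 h)⟩
  have heq : (fun x => sInf {n | p n x}) = fun x => Nat.find (hex x) := by
    funext x
    have hdef : sInf {n | p n x ∨ ∀ m, ¬ p m x} = Nat.find (hex x) := by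
      convert Nat.sInf_def (hex x) <;> rfl
    rw [← hdef]
    by_cases h : ∃ n, p n x
    · simp only [not_forall_not.2 h, or_false]
    · rw [Set.eq_empty_of_forall_notMem (s := {n | p n x}) (not_exists.1 h), Nat.sInf_empty,
        eq_comm, Nat.sInf_eq_zero]
      exact Or.inl (Or.inr (not_exists.1 h))
  rw [heq]
  refine measurable_find hex fun n => measurableSet_setOfPred.2 ?_
  exact (measurableSet_setOfPred.1 (hp n)).or
    (Measurable.forall fun m => (measurableSet_setOfPred.1 (hp m)).not)

open Classical in
noncomputable def stepSeq (r : P → P → Prop) (X : ℕ → P) : ℕ → Bool :=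
  fun k => decide (r (X k) (X (k + 1)))

open Classical in
lemma measurable_stepSeq (r : P → P → Prop) : Measurable (stepSeq r) := by
  refine measurable_pi_lambda _ fun k => ?_
  have hpair : Measurable fun X : ℕ → P => (X k, X (k + 1)) :=
    (measurable_pi_apply k).prodMk (measurable_pi_apply (k + 1))
  exact (Measurable.of_discrete (f := fun p : P × P => decide (r p.1 p.2))).comp hpair

lemma measurableSet_vecSet (r : P → P → Prop) : MeasurableSet (vecSet r) := by
  have : vecSet r = stepSeq r ⁻¹' {fun _ => false} := by
    ext X
    simp [vecSet, stepSeq, funext_iff]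
  exact this ▸ measurable_stepSeq r (measurableSet_singleton _)

lemma measurableSet_isConstFrom (m : ℕ) : MeasurableSet {s : ℕ → Bool | IsConstFrom s m} := by
  simp only [IsConstFrom, Set.ofPred_forall]
  exact .iInter fun k => measurableSet_eq_fun (measurable_pi_apply _) (measurable_pi_apply _)

lemma measurableSet_exists_isConstFrom : MeasurableSet {s : ℕ → Bool | ∃ m, IsConstFrom s m} := by
  simp only [Set.ofPred_exists]
  exact .iUnion measurableSet_isConstFrom

lemma measurable_stabIndex : Measurable stabIndex :=
  measurable_sInf_setOf measurableSet_isConstFrom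

lemma measurable_switchColour : Measurable switchColour := by
  have : Measurable firstSwitch := measurable_sInf_setOf fun k =>
    (measurableSet_eq_fun (measurable_pi_apply k) (measurable_pi_apply (k + 1))).compl
  exact (Measurable.of_discrete (f := fun p : ℕ × Bool =>
    if Odd p.1 then (2 : Fin 3) else bif p.2 then 0 else 1)).comp
    (this.prodMk (measurable_pi_apply 0))

lemma measurable_seqTail (m : ℕ) : Measurable (seqTail m : (ℕ → α) → ℕ → α) :=
  measurable_pi_lambda _ fun k => measurable_pi_apply (m + k)

lemma isThin_iff {Q : Type*} [m : MeasurableSpace Q] [DiscreteMeasurableSpace Q] [Countable Q]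
    (r : Q → Q → Prop) :
    IsThin r ↔ ∃ c : (ℕ → Q) → Fin 3, Measurable c ∧ ∀ X ∈ vecSet r, c X ≠ c (seqShift X) := by
  obtain rfl : m = ⊤ := eq_top_iff.2 fun s _ => MeasurableSet.of_discrete
  -- after the substitution `⊤` is no longer a local instance
  let _ : MeasurableSpace Q := ⊤
  constructor
  · rintro ⟨c, hc, hne⟩
    classical
    refine ⟨fun X => if h : X ∈ vecSet r then c ⟨X, h⟩ else 0,
      hc.dite measurable_const (measurableSet_vecSet r), fun X hX => ?_⟩
    simpa [hX, seqShift_mem_vecSet hX] using hne X hX (seqShift_mem_vecSet hX)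
  · rintro ⟨c, hc, hne⟩
    exact ⟨fun X => c X, hc.comp measurable_subtype_coe, fun X hX _ => hne X hX⟩

end Measurability

section Product

variable {Q₁ Q₂ : Type*} {r₁ : Q₁ → Q₁ → Prop} {r₂ : Q₂ → Q₂ → Prop}
  {c₁ : (ℕ → Q₁) → Fin 3} {c₂ : (ℕ → Q₂) → Fin 3}

noncomputable def fstStep (r₁ : Q₁ → Q₁ → Prop) : (ℕ → Q₁ × Q₂) → ℕ → Bool :=
  stepSeq fun p q => r₁ p.1 q.1

def tailColour (c₁ : (ℕ → Q₁) → Fin 3) (c₂ : (ℕ → Q₂) → Fin 3) (b : Bool)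
    (X : ℕ → Q₁ × Q₂) : Fin 3 :=
  bif b then c₂ (Prod.snd ∘ X) else c₁ (Prod.fst ∘ X)

open Classical in
noncomputable def productColour (r₁ : Q₁ → Q₁ → Prop) (c₁ : (ℕ → Q₁) → Fin 3)
    (c₂ : (ℕ → Q₂) → Fin 3) (X : ℕ → Q₁ × Q₂) : Fin 3 :=
  let s := fstStep r₁ X
  if ∃ m, IsConstFrom s m then
    countdownColour (stabIndex s) (tailColour c₁ c₂ (s (stabIndex s)) (seqTail (stabIndex s) X))
  else switchColour s

lemma tailColour_ne_seqShift (hc₁ : ∀ Z ∈ vecSet r₁, c₁ Z ≠ c₁ (seqShift Z))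
    (hc₂ : ∀ Z ∈ vecSet r₂, c₂ Z ≠ c₂ (seqShift Z)) {X : ℕ → Q₁ × Q₂}
    (hX : X ∈ vecSet (fun p q : Q₁ × Q₂ => r₁ p.1 q.1 ∧ r₂ p.2 q.2)) {b : Bool}
    (hb : ∀ k, fstStep r₁ X k = b) :
    tailColour c₁ c₂ b X ≠ tailColour c₁ c₂ b (seqShift X) := by
  cases b
  · exact hc₁ _ fun k => by simpa [fstStep, stepSeq] using hb k
  · exact hc₂ _ fun k hk => hX k ⟨by simpa [fstStep, stepSeq] using hb k, hk⟩

lemma productColour_ne_seqShift (hc₁ : ∀ Z ∈ vecSet r₁, c₁ Z ≠ c₁ (seqShift Z))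
    (hc₂ : ∀ Z ∈ vecSet r₂, c₂ Z ≠ c₂ (seqShift Z)) {X : ℕ → Q₁ × Q₂}
    (hX : X ∈ vecSet (fun p q : Q₁ × Q₂ => r₁ p.1 q.1 ∧ r₂ p.2 q.2)) :
    productColour r₁ c₁ c₂ X ≠ productColour r₁ c₁ c₂ (seqShift X) := by
  have hs : fstStep r₁ (seqShift X) = seqShift (fstStep r₁ X) := rfl
  by_cases hE : ∃ m, IsConstFrom (fstStep r₁ X) m
  · have hE' : ∃ m, IsConstFrom (fstStep r₁ (seqShift X)) m := exists_isConstFrom_seqShift.2 hE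
    simp only [productColour, if_pos hE, if_pos hE']
    rw [hs, stabIndex_seqShift hE]
    cases hd : stabIndex (fstStep r₁ X) with
    | zero =>
      have hc : IsConstFrom (fstStep r₁ X) 0 := hd ▸ isConstFrom_stabIndex hE
      rw [show seqShift (fstStep r₁ X) (0 - 1) = fstStep r₁ X 0 from hc 1, seqTail_seqShift,
        seqTail_succ]
      exact tailColour_ne_seqShift hc₁ hc₂ (seqTail_mem_vecSet hX) hc
    | succ n =>
      rw [Nat.add_sub_cancel, seqTail_seqShift]
      exact countdownColour_succ_ne n _
  · have hE' : ¬ ∃ m, IsConstFrom (fstStep r₁ (seqShift X)) m :=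
      fun h => hE (exists_isConstFrom_seqShift.1 h)
    simp only [productColour, if_neg hE, if_neg hE']
    exact switchColour_ne_seqShift (exists_ne_succ_of_not_exists_isConstFrom hE)

variable [MeasurableSpace Q₁] [MeasurableSpace Q₂]

lemma measurable_tailColour (hc₁ : Measurable c₁) (hc₂ : Measurable c₂) :
    Measurable fun p : Bool × (ℕ → Q₁ × Q₂) => tailColour c₁ c₂ p.1 p.2 := by
  refine measurable_from_prod_countable_right fun b => ?_
  cases b
  · exact hc₁.comp (measurable_pi_lambda _ fun k => measurable_fst.comp (measurable_pi_apply k))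
  · exact hc₂.comp (measurable_pi_lambda _ fun k => measurable_snd.comp (measurable_pi_apply k))

variable [DiscreteMeasurableSpace Q₁] [Countable Q₁] [DiscreteMeasurableSpace Q₂] [Countable Q₂]

lemma measurable_productColour (hc₁ : Measurable c₁) (hc₂ : Measurable c₂) :
    Measurable (productColour r₁ c₁ c₂) := by
  have hs : Measurable (fstStep r₁ : (ℕ → Q₁ × Q₂) → ℕ → Bool) := measurable_stepSeq _
  have hstable : ∀ n, Measurable fun X : ℕ → Q₁ × Q₂ =>
      countdownColour n (tailColour c₁ c₂ (fstStep r₁ X n) (seqTail n X)) := fun n =>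
    (Measurable.of_discrete (f := countdownColour n)).comp ((measurable_tailColour hc₁ hc₂).comp
      (((measurable_pi_apply n).comp hs).prodMk (measurable_seqTail n)))
  refine Measurable.ite (measurableSet_exists_isConstFrom.preimage hs) ?_
    (measurable_switchColour.comp hs)
  exact (measurable_from_prod_countable_left (f := fun p : (ℕ → Q₁ × Q₂) × ℕ =>
      countdownColour p.2 (tailColour c₁ c₂ (fstStep r₁ p.1 p.2) (seqTail p.2 p.1))) hstable).comp
    (measurable_id.prodMk (measurable_stabIndex.comp hs))

end Product

theorem thin_product_general {Q₁ Q₂ : Type*} [Countable Q₁] [Countable Q₂]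
    (r₁ : Q₁ → Q₁ → Prop) (r₂ : Q₂ → Q₂ → Prop)
    (h₁ : IsThin r₁) (h₂ : IsThin r₂) :
    IsThin (fun p q : Q₁ × Q₂ => r₁ p.1 q.1 ∧ r₂ p.2 q.2) := by
  let _ : MeasurableSpace Q₁ := ⊤
  let _ : MeasurableSpace Q₂ := ⊤
  obtain ⟨c₁, hc₁, hne₁⟩ := (isThin_iff r₁).1 h₁
  obtain ⟨c₂, hc₂, hne₂⟩ := (isThin_iff r₂).1 h₂
  exact (isThin_iff _).2 ⟨productColour r₁ c₁ c₂, measurable_productColour hc₁ hc₂,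
    fun X hX => productColour_ne_seqShift hne₁ hne₂ hX⟩

/-- The product of two countable thin quasi-orders, ordered coordinatewise, is thin. -/
theorem thin_product {Q₁ Q₂ : Type*} [Countable Q₁] [Countable Q₂]
    (r₁ : Q₁ → Q₁ → Prop) (r₂ : Q₂ → Q₂ → Prop)
    (hr₁ : Reflexive r₁) (ht₁ : Transitive r₁)
    (hr₂ : Reflexive r₂) (ht₂ : Transitive r₂)
    (h₁ : IsThin r₁) (h₂ : IsThin r₂) :
    IsThin (fun p q : Q₁ × Q₂ => r₁ p.1 q.1 ∧ r₂ p.2 q.2) :=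
  thin_product_general r₁ r₂ h₁ h₂
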